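/- Let p ≥ 1, α > 0, and consider the nonlocal operator L_Ψ[f](σ) = f'' + (p/σ)f' - (σ/2)f' + (2(p-1)/σ²)f - (2p/σ)∫₀^σ (f'(z)/z)dz acting on the span of even monomials {σ^{2k} : k ≥ 1}. Then every eigenvalue of L_Ψ on this span is a negative integer -k for some k ≥ 1; in particular L_Ψ has no nonzero fixed vector (element of its nullspace) in this span. -/

import Mathlib

/-!
With `x = σ²`, `L_Ψ` sends `σ^(2j+2)` to `c_{j+1} σ^(2j) - (j+1) σ^(2j+2)` for `σ > 0`: every term
except `-(σ/2) f'` lowers the degree in `x`. So on `f = P(σ²)` with `P(0) = 0` it acts as a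
polynomial map that is triangular with diagonal `-(j+1)`, and comparing the top coefficients of
`L_Ψ P = λ P` gives `λ = -deg P`.
-/

/-- The nonlocal operator
`L_Ψ[f](σ) = f'' + (p/σ)f' - (σ/2)f' + (2(p-1)/σ²)f - (2p/σ)∫₀^σ f'(z)/z dz`. -/
noncomputable def LPsi (p : ℕ) (f : ℝ → ℝ) (σ : ℝ) : ℝ :=
  deriv (deriv f) σ + ((p : ℝ) / σ) * deriv f σ - (σ / 2) * deriv f σ
    + (2 * ((p : ℝ) - 1) / σ ^ 2) * f σ
    - (2 * (p : ℝ) / σ) * ∫ z in (0:ℝ)..σ, deriv f z / z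

open Finset Polynomial

section Calculus

variable {ι : Type*} (s : Finset ι) (b : ι → ℝ) (e : ι → ℕ)

theorem hasDerivAt_sum_mul_pow_succ (x : ℝ) :
    HasDerivAt (fun x => ∑ i ∈ s, b i * x ^ (e i + 1))
      (∑ i ∈ s, b i * (e i + 1) * x ^ e i) x := by
  refine (HasDerivAt.fun_sum fun i _ =>
    (hasDerivAt_pow (e i + 1) x).const_mul (b i)).congr_deriv ?_
  push_cast
  simp [mul_assoc]

theorem integral_sum_mul_pow_succ_div (σ : ℝ) :
    ∫ z in (0 : ℝ)..σ, (∑ i ∈ s, b i * z ^ (e i + 1)) / z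
      = ∑ i ∈ s, b i * σ ^ (e i + 1) / (e i + 1) := by
  have hae : ∀ᵐ z, z ∈ Set.uIoc 0 σ →
      (∑ i ∈ s, b i * z ^ (e i + 1)) / z = ∑ i ∈ s, b i * z ^ e i := by
    filter_upwards [(Set.countable_singleton (0 : ℝ)).ae_notMem MeasureTheory.volume] with z hz _
    rw [sum_div]
    refine sum_congr rfl fun i _ => ?_
    field_simp [show z ≠ 0 from hz]
    ring
  rw [intervalIntegral.integral_congr_ae hae,
    intervalIntegral.integral_finsetSum (f := fun i z => b i * z ^ e i) fun i _ =>
      (by fun_prop : Continuous fun z : ℝ => b i * z ^ e i).intervalIntegrable _ _]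
  simp [integral_pow, mul_div_assoc]

end Calculus

/-- The constant `c_{j+1}` of the paper. -/
noncomputable def LPsiCoeff (p j : ℕ) : ℝ :=
  (2 * j + 2) * (2 * j + 1) + 2 * p * (j + 1) + 2 * ((p : ℝ) - 1) - 4 * p * (j + 1) / (2 * j + 1)

theorem LPsi_sum_even_monomials (p : ℕ) (s : Finset ℕ) (b : ℕ → ℝ) {σ : ℝ} (hσ : 0 < σ) :
    LPsi p (fun σ => ∑ j ∈ s, b j * σ ^ (2 * j + 2)) σ
      = ∑ j ∈ s, b j * (LPsiCoeff p j * σ ^ (2 * j) - (j + 1) * σ ^ (2 * j + 2)) := by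
  have hf' : deriv (fun σ => ∑ j ∈ s, b j * σ ^ (2 * j + 2))
      = fun x => ∑ j ∈ s, b j * (2 * j + 2) * x ^ (2 * j + 1) := by
    funext x
    refine ((hasDerivAt_sum_mul_pow_succ s b (fun j => 2 * j + 1) x).congr_deriv
      (sum_congr rfl fun j _ => ?_)).deriv
    push_cast
    ring
  have hf'' : deriv (deriv (fun σ => ∑ j ∈ s, b j * σ ^ (2 * j + 2))) σ
      = ∑ j ∈ s, b j * (2 * j + 2) * (2 * j + 1) * σ ^ (2 * j) := by
    rw [hf']
    refine ((hasDerivAt_sum_mul_pow_succ s _ (fun j => 2 * j) σ).congr_deriv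
      (sum_congr rfl fun j _ => ?_)).deriv
    push_cast
    ring
  have hint : ∫ z in (0 : ℝ)..σ, deriv (fun σ => ∑ j ∈ s, b j * σ ^ (2 * j + 2)) z / z
      = ∑ j ∈ s, b j * (2 * j + 2) * σ ^ (2 * j + 1) / (2 * j + 1) := by
    rw [hf', integral_sum_mul_pow_succ_div]
    push_cast
    rfl
  unfold LPsi
  rw [hf'', hint, hf']
  simp only [mul_sum, ← sum_add_distrib, ← sum_sub_distrib]
  refine sum_congr rfl fun j _ => ?_
  unfold LPsiCoeff
  field_simp
  ring

/-- `L_Ψ` in the variable `x = σ²`, on polynomials without constant term. -/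
noncomputable def LPsiPoly (p : ℕ) (P : ℝ[X]) : ℝ[X] :=
  ∑ j ∈ range P.natDegree,
    C (P.coeff (j + 1)) * (C (LPsiCoeff p j) * X ^ j - C ((j : ℝ) + 1) * X ^ (j + 1))

theorem eval_sq_eq_sum_range {P : ℝ[X]} (hP : P.coeff 0 = 0) (σ : ℝ) :
    P.eval (σ ^ 2) = ∑ j ∈ range P.natDegree, P.coeff (j + 1) * σ ^ (2 * j + 2) := by
  simp [eval_eq_sum_range, sum_range_succ', hP, ← pow_mul, mul_add]

theorem LPsi_eval_sq (p : ℕ) {P : ℝ[X]} (hP : P.coeff 0 = 0) {σ : ℝ} (hσ : 0 < σ) :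
    LPsi p (fun σ => P.eval (σ ^ 2)) σ = (LPsiPoly p P).eval (σ ^ 2) := by
  simp [eval_sq_eq_sum_range hP, LPsi_sum_even_monomials p _ _ hσ, LPsiPoly, eval_finsetSum,
    ← pow_mul, mul_add]

theorem coeff_natDegree_LPsiPoly (p : ℕ) (P : ℝ[X]) :
    (LPsiPoly p P).coeff P.natDegree = -P.natDegree * P.leadingCoeff := by
  rw [LPsiPoly, leadingCoeff]
  cases P.natDegree with
  | zero => simp
  | succ m =>
    simp only [sum_range_succ, coeff_add, finsetSum_coeff, coeff_C_mul, coeff_sub, coeff_X_pow]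
    rw [sum_eq_zero fun j hj => by
      have hjm := mem_range.1 hj
      simp [show m + 1 ≠ j by omega, show m ≠ j by omega]]
    simp
    ring

theorem Polynomial.eq_of_forall_pos_eval_sq_eq {P Q : ℝ[X]}
    (h : ∀ σ : ℝ, 0 < σ → P.eval (σ ^ 2) = Q.eval (σ ^ 2)) : P = Q :=
  eq_of_infinite_eval_eq P Q <| (Set.Ioi_infinite 0).mono fun x hx => by
    simpa [Real.sq_sqrt (le_of_lt hx)] using h (√x) (Real.sqrt_pos.2 hx)

theorem eq_neg_natDegree_of_LPsiPoly_eq_C_mul {p : ℕ} {P : ℝ[X]} {lam : ℝ} (hP0 : P.coeff 0 = 0)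
    (hP : P ≠ 0) (h : LPsiPoly p P = C lam * P) : 1 ≤ P.natDegree ∧ lam = -P.natDegree := by
  have hlead : -P.natDegree * P.leadingCoeff = lam * P.leadingCoeff := by
    rw [← coeff_natDegree_LPsiPoly, h, coeff_C_mul, leadingCoeff]
  refine ⟨?_, (mul_right_cancel₀ (leadingCoeff_ne_zero.2 hP) hlead).symm⟩
  by_contra! h0
  exact hP (by rw [eq_C_of_natDegree_eq_zero (Nat.lt_one_iff.1 h0), hP0, C_0])

theorem exists_eval_sq_of_mem_span_even_monomials {f : ℝ → ℝ}
    (hf : f ∈ Submodule.span ℝ {g : ℝ → ℝ | ∃ k : ℕ, 1 ≤ k ∧ g = fun σ : ℝ => σ ^ (2 * k)}) :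
    ∃ P : ℝ[X], P.coeff 0 = 0 ∧ f = fun σ => P.eval (σ ^ 2) := by
  induction hf using Submodule.span_induction with
  | mem g hg =>
    obtain ⟨k, hk, rfl⟩ := hg
    exact ⟨X ^ k, by simp [coeff_X_pow, (Nat.one_le_iff_ne_zero.1 hk).symm], by simp [pow_mul]⟩
  | zero => exact ⟨0, coeff_zero 0, funext fun _ => eval_zero.symm⟩
  | add g h _ _ hg hh =>
    obtain ⟨P, hP, rfl⟩ := hg
    obtain ⟨Q, hQ, rfl⟩ := hh
    exact ⟨P + Q, by simp [hP, hQ], by ext; simp⟩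
  | smul a g _ hg =>
    obtain ⟨P, hP, rfl⟩ := hg
    exact ⟨a • P, by simp [hP], by ext; simp⟩

theorem LPsi_spectrum_on_even_monomials_general (p : ℕ)
    (f : ℝ → ℝ)
    (hf : f ∈ Submodule.span ℝ
      {g : ℝ → ℝ | ∃ k : ℕ, 1 ≤ k ∧ g = fun σ : ℝ => σ ^ (2 * k)}) :
    (∀ lam : ℝ, (∀ σ : ℝ, 0 < σ → LPsi p f σ = lam * f σ) →
      (∀ σ : ℝ, 0 < σ → f σ = 0) ∨ ∃ k : ℕ, 1 ≤ k ∧ lam = -(k : ℝ)) ∧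
    ((∀ σ : ℝ, 0 < σ → LPsi p f σ = 0) → ∀ σ : ℝ, 0 < σ → f σ = 0) := by
  obtain ⟨P, hP0, rfl⟩ := exists_eval_sq_of_mem_span_even_monomials hf
  have eigen (lam : ℝ)
      (h : ∀ σ : ℝ, 0 < σ → LPsi p (fun σ => P.eval (σ ^ 2)) σ = lam * P.eval (σ ^ 2)) :
      P = 0 ∨ 1 ≤ P.natDegree ∧ lam = -P.natDegree := by
    have hpoly : LPsiPoly p P = C lam * P :=
      eq_of_forall_pos_eval_sq_eq fun σ hσ => by
        rw [← LPsi_eval_sq p hP0 hσ, h σ hσ, eval_mul, eval_C]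
    exact or_iff_not_imp_left.2 fun hP => eq_neg_natDegree_of_LPsiPoly_eq_C_mul hP0 hP hpoly
  refine ⟨fun lam h => ?_, fun h => ?_⟩
  · rcases eigen lam h with rfl | ⟨hK, rfl⟩
    · simp
    · exact Or.inr ⟨_, hK, rfl⟩
  · rcases eigen 0 (by simpa using h) with rfl | ⟨hK, h0⟩
    · simp
    · exact absurd (by exact_mod_cast neg_eq_zero.1 h0.symm) (Nat.one_le_iff_ne_zero.1 hK)

/-- On the span of the even monomials `{σ^(2k) : k ≥ 1}`, every eigenvalue of the
nonlocal operator `L_Ψ` is a negative integer `-k` with `k ≥ 1`; in particular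
`L_Ψ` has no nonzero element of its nullspace in this span. -/
theorem LPsi_spectrum_on_even_monomials (p : ℕ) (hp : 1 ≤ p)
    (f : ℝ → ℝ)
    (hf : f ∈ Submodule.span ℝ
      {g : ℝ → ℝ | ∃ k : ℕ, 1 ≤ k ∧ g = fun σ : ℝ => σ ^ (2 * k)}) :
    (∀ lam : ℝ, (∀ σ : ℝ, 0 < σ → LPsi p f σ = lam * f σ) →
      (∀ σ : ℝ, 0 < σ → f σ = 0) ∨ ∃ k : ℕ, 1 ≤ k ∧ lam = -(k : ℝ)) ∧
    ((∀ σ : ℝ, 0 < σ → LPsi p f σ = 0) → ∀ σ : ℝ, 0 < σ → f σ = 0) :=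
  LPsi_spectrum_on_even_monomials_general p f hf
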